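/- Let ζ be a primitive complex cube root of unity and let a = 4, b = 1, τ = 4ζ + ζ⁻¹. Then |1 - conj(τ)|² = 19 and (5+2)²/3 = 49/3 < 19, so there is no finite family of 7 primitive cube roots of unity c₁,…,c₇ with 1 - conj(τ) = ∑ᵢ 1/(1 - cᵢ). -/

import Mathlib

/-! A primitive cube root of unity `ζ` has `conj ζ = ζ⁻¹ = -1 - ζ`, so the Eisenstein norm form
gives `‖a + b ζ‖² = a² - ab + b²`. Hence `1 - conj τ = 5 + 3ζ` has squared norm `19`, while each
`1 / (1 - cᵢ)` has norm `1 / √3`, so a sum of seven of them has squared norm at most `49 / 3`. -/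

open ComplexConjugate Finset

lemma sq_add_self_add_one_eq_zero_of_pow_three_eq_one {R : Type*} [CommRing R] [IsDomain R]
    {c : R} (h3 : c ^ 3 = 1) (h1 : c ≠ 1) : c ^ 2 + c + 1 = 0 := by
  have hfactor : (c - 1) * (c ^ 2 + c + 1) = 0 := by linear_combination h3
  exact (mul_eq_zero.mp hfactor).resolve_left (sub_ne_zero.mpr h1)

namespace Complex

variable {ζ : ℂ}

lemma norm_eq_one_of_sq_add_self_add_one_eq_zero (h : ζ ^ 2 + ζ + 1 = 0) : ‖ζ‖ = 1 :=
  norm_eq_one_of_pow_eq_one (n := 3) (by linear_combination (ζ - 1) * h) three_ne_zero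

lemma inv_eq_neg_one_sub_of_sq_add_self_add_one_eq_zero (h : ζ ^ 2 + ζ + 1 = 0) :
    ζ⁻¹ = -1 - ζ :=
  inv_eq_of_mul_eq_one_right (by linear_combination -h)

lemma conj_eq_neg_one_sub_of_sq_add_self_add_one_eq_zero (h : ζ ^ 2 + ζ + 1 = 0) :
    conj ζ = -1 - ζ := by
  rw [← inv_eq_conj (norm_eq_one_of_sq_add_self_add_one_eq_zero h),
    inv_eq_neg_one_sub_of_sq_add_self_add_one_eq_zero h]

lemma sq_norm_add_mul_of_sq_add_self_add_one_eq_zero (h : ζ ^ 2 + ζ + 1 = 0) (a b : ℝ) :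
    ‖(a : ℂ) + b * ζ‖ ^ 2 = a ^ 2 - a * b + b ^ 2 := by
  apply ofReal_injective
  rw [ofReal_pow, ← mul_conj', map_add, map_mul, conj_ofReal, conj_ofReal,
    conj_eq_neg_one_sub_of_sq_add_self_add_one_eq_zero h]
  push_cast
  linear_combination (-(b : ℂ) ^ 2) * h

lemma norm_one_div_one_sub_of_sq_add_self_add_one_eq_zero (h : ζ ^ 2 + ζ + 1 = 0) :
    ‖1 / (1 - ζ)‖ = 1 / √3 := by
  have hsq : ‖1 - ζ‖ ^ 2 = 3 := by
    have := sq_norm_add_mul_of_sq_add_self_add_one_eq_zero h 1 (-1)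
    norm_num [← sub_eq_add_neg] at this
    exact this
  rw [norm_div, norm_one, ← hsq, Real.sqrt_sq (norm_nonneg _)]

lemma sq_norm_sum_one_div_one_sub_le {ι : Type*} [Fintype ι] {c : ι → ℂ}
    (hc : ∀ i, c i ^ 3 = 1 ∧ c i ≠ 1) :
    ‖∑ i, 1 / (1 - c i)‖ ^ 2 ≤ (Fintype.card ι : ℝ) ^ 2 / 3 := by
  have hnorm : ‖∑ i, 1 / (1 - c i)‖ ≤ Fintype.card ι * (1 / √3) := by
    simpa using norm_sum_le_of_le univ fun i _ ↦ (norm_one_div_one_sub_of_sq_add_self_add_one_eq_zero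
      (sq_add_self_add_one_eq_zero_of_pow_three_eq_one (hc i).1 (hc i).2)).le
  calc ‖∑ i, 1 / (1 - c i)‖ ^ 2 ≤ (Fintype.card ι * (1 / √3)) ^ 2 :=
        pow_le_pow_left₀ (norm_nonneg _) hnorm 2
    _ = (Fintype.card ι : ℝ) ^ 2 / 3 := by
        rw [mul_pow, div_pow, Real.sq_sqrt zero_le_three, one_pow, mul_one_div]

end Complex

theorem cubic_threefold_obstruction (ζ : ℂ) (hζ : ζ ^ 2 + ζ + 1 = 0) (τ : ℂ)
    (hτ : τ = 4 * ζ + ζ⁻¹) :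
    ‖1 - (starRingEnd ℂ) τ‖ ^ 2 = 19 ∧ (49 : ℝ) / 3 < 19 ∧
    ¬∃ c : Fin 7 → ℂ, (∀ i, c i ^ 3 = 1 ∧ c i ≠ 1) ∧
      1 - (starRingEnd ℂ) τ = ∑ i, 1 / (1 - c i) := by
  have hconj : 1 - conj τ = ((5 : ℝ) : ℂ) + ((3 : ℝ) : ℂ) * ζ := by
    rw [hτ, Complex.inv_eq_neg_one_sub_of_sq_add_self_add_one_eq_zero hζ]
    simp only [map_add, map_mul, map_sub, map_neg, map_one, map_ofNat,
      Complex.conj_eq_neg_one_sub_of_sq_add_self_add_one_eq_zero hζ]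
    push_cast
    ring
  have h19 : ‖1 - conj τ‖ ^ 2 = 19 := by
    rw [hconj, Complex.sq_norm_add_mul_of_sq_add_self_add_one_eq_zero hζ]
    norm_num
  refine ⟨h19, by norm_num, ?_⟩
  rintro ⟨c, hc, hsum⟩
  have hle := Complex.sq_norm_sum_one_div_one_sub_le hc
  rw [← hsum, h19, Fintype.card_fin] at hle
  norm_num at hle
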